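/- Let A be a complex unital Banach algebra and let Λ : A → ℂ be a ℂ-linear functional (not assumed continuous) such that Λ(1) = 1 and Λ(a) ≠ 0 for every invertible element a ∈ A. Then Λ(ab + ba) = 2Λ(a)Λ(b) for all a, b ∈ A. -/

import Mathlib

/-!
Non-vanishing on units forces `‖Λ x‖ ≤ ‖x‖`: otherwise `1 - (Λ x)⁻¹ • x` would be a
unit killed by `Λ`. It suffices to show `Λ (a * a) = 0` whenever `Λ a = 0`; applied to
`a - Λ a • 1` this gives `Λ (a * a) = Λ a ^ 2`, and polarization gives the theorem.
For such `a`, `f z = Λ (exp (z • a))` is entire, zero-free and of exponential type, with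
`f 0 = 1`, `f' 0 = Λ a = 0` and `f'' 0 = Λ (a * a)`. Writing `f = exp ∘ g`, the real part
of `g` grows at most linearly, hence by Borel–Carathéodory so does `g`, and Cauchy's
estimate gives `g'' 0 = 0`. Then `f'' 0 = f' 0 * g' 0 + f 0 * g'' 0 = 0`.
-/

open Metric Set Filter Topology NormedSpace

namespace Complex

theorem exists_differentiable_exp_eq_of_ne_zero {f : ℂ → ℂ} (hf : Differentiable ℂ f)
    (hf0 : ∀ z, f z ≠ 0) {w : ℂ} (hw : exp w = f 0) :
    ∃ g : ℂ → ℂ, Differentiable ℂ g ∧ g 0 = w ∧ ∀ z, exp (g z) = f z := by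
  obtain ⟨g, hg0, hg⟩ := (hf.deriv.div hf hf0).isExactOn_univ.with_val_at 0 w
  have hg' (z : ℂ) : HasDerivAt g (deriv f z / f z) z := hg z (mem_univ z)
  refine ⟨g, fun z => (hg' z).differentiableAt, hg0, fun z => ?_⟩
  have hderiv (z : ℂ) : HasDerivAt (fun z => f z * exp (-g z)) 0 z := by
    refine ((hf z).hasDerivAt.mul (hg' z).neg.cexp).congr_deriv ?_
    field_simp [hf0 z]
    ring
  have hconst := is_const_of_deriv_eq_zero (fun z => (hderiv z).differentiableAt)
    (fun z => (hderiv z).deriv) z 0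
  rw [hg0, exp_neg, exp_neg, ← hw, mul_inv_cancel₀ (exp_ne_zero w)] at hconst
  exact ((mul_inv_eq_one₀ (exp_ne_zero _)).mp hconst).symm

theorem norm_le_affine_of_re_le_affine {g : ℂ → ℂ} (hg : Differentiable ℂ g) (hg0 : g 0 = 0)
    {C D : ℝ} (hre : ∀ z, (g z).re ≤ C * ‖z‖ + D) (z : ℂ) :
    ‖g z‖ ≤ 2 * (|C| + |D| + 1) + 4 * |C| * ‖z‖ := by
  set R := 2 * ‖z‖ + 1
  set M := |C| * R + |D| + 1
  have hz : z ∈ ball (0 : ℂ) R := by rw [mem_ball_zero_iff]; linarith [norm_nonneg z]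
  have hmaps : MapsTo g (ball 0 R) {w | w.re ≤ M} := by
    intro y hy
    have hy : ‖y‖ < R := mem_ball_zero_iff.mp hy
    have : C * ‖y‖ ≤ |C| * R := by nlinarith [le_abs_self C, abs_nonneg C, norm_nonneg y]
    show (g y).re ≤ M
    linarith [hre y, le_abs_self D]
  calc ‖g z‖ ≤ 2 * M * ‖z‖ / (R - ‖z‖) :=
        borelCaratheodory_zero (by positivity) hg.differentiableOn hmaps (by positivity) hz hg0
    _ ≤ 2 * M := by
      rw [div_le_iff₀ (by linarith [norm_nonneg z])]
      nlinarith [norm_nonneg z, abs_nonneg C, abs_nonneg D]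
    _ = 2 * (|C| + |D| + 1) + 4 * |C| * ‖z‖ := by ring

theorem iteratedDeriv_two_eq_zero_of_norm_le_affine {g : ℂ → ℂ} (hg : Differentiable ℂ g)
    {A B : ℝ} (hbound : ∀ z, ‖g z‖ ≤ A + B * ‖z‖) : iteratedDeriv 2 g 0 = 0 := by
  have hcauchy (R : ℝ) (hR : 0 < R) :
      ‖iteratedDeriv 2 g 0‖ ≤ 2 * A * R⁻¹ ^ 2 + 2 * B * R⁻¹ := by
    have := norm_iteratedDeriv_le_of_forall_mem_sphere_norm_le 2 hR hg.diffContOnCl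
      fun z hz => (hbound z).trans_eq (by rw [mem_sphere_zero_iff_norm.mp hz])
    refine this.trans_eq ?_
    simp only [Nat.factorial_two, Nat.cast_ofNat]
    field_simp
  have hlim : Tendsto (fun R : ℝ => 2 * A * R⁻¹ ^ 2 + 2 * B * R⁻¹) atTop (𝓝 0) := by
    simpa using ((tendsto_inv_atTop_zero.pow 2).const_mul (2 * A)).add
      (tendsto_inv_atTop_zero.const_mul (2 * B))
  exact norm_le_zero_iff.mp <| ge_of_tendsto hlim <|
    (eventually_gt_atTop 0).mono hcauchy

theorem deriv_deriv_eq_zero_of_ne_zero_of_norm_le_mul_exp {f : ℂ → ℂ}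
    (hf : Differentiable ℂ f) (hf0 : ∀ z, f z ≠ 0) {c C : ℝ}
    (hbound : ∀ z, ‖f z‖ ≤ c * Real.exp (C * ‖z‖)) (h0 : f 0 = 1) (h1 : deriv f 0 = 0) :
    deriv (deriv f) 0 = 0 := by
  obtain ⟨g, hg, hg0, hgf⟩ :=
    exists_differentiable_exp_eq_of_ne_zero hf hf0 (w := 0) (by simp [h0])
  have hc : 0 < c := one_pos.trans_le (by simpa [h0] using hbound 0)
  have hre (z : ℂ) : (g z).re ≤ C * ‖z‖ + Real.log c := by
    rw [← Real.exp_le_exp, Real.exp_add, Real.exp_log hc, mul_comm _ c, ← norm_exp, hgf]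
    exact hbound z
  have hg2 :=
    iteratedDeriv_two_eq_zero_of_norm_le_affine hg (norm_le_affine_of_re_le_affine hg hg0 hre)
  have hderiv : deriv f = fun z => f z * deriv g z := funext fun z => by
    simpa only [hgf] using ((hg z).hasDerivAt.cexp).deriv
  rw [iteratedDeriv_succ, iteratedDeriv_one] at hg2
  rw [hderiv, deriv_fun_mul (hf 0) (hg.deriv 0), h1, hg2]
  simp

end Complex

theorem norm_exp_le_mul_exp_norm {𝔸 : Type*} [NormedRing 𝔸] [NormedAlgebra ℂ 𝔸]
    [CompleteSpace 𝔸] (x : 𝔸) : ‖exp x‖ ≤ max ‖(1 : 𝔸)‖ 1 * Real.exp ‖x‖ := by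
  have hexp : HasSum (fun n : ℕ => max ‖(1 : 𝔸)‖ 1 * (‖x‖ ^ n / n.factorial))
      (max ‖(1 : 𝔸)‖ 1 * Real.exp ‖x‖) := by
    rw [Real.exp_eq_exp_ℝ]
    exact (expSeries_div_hasSum_exp ‖x‖).mul_left _
  rw [← (exp_series_hasSum_exp' (𝕂 := ℂ) x).tsum_eq]
  refine tsum_of_norm_bounded hexp fun n => ?_
  have hpow : ‖x ^ n‖ ≤ max ‖(1 : 𝔸)‖ 1 * ‖x‖ ^ n := by
    rcases n.eq_zero_or_pos with rfl | hn
    · simp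
    · exact (norm_pow_le' x hn).trans (le_mul_of_one_le_left (by positivity) (le_max_right _ _))
  rw [norm_smul, norm_inv, Complex.norm_natCast, mul_div_assoc', div_eq_inv_mul]
  gcongr

namespace LinearMap

theorem norm_apply_le_of_map_isUnit_ne_zero {𝕜 A : Type*} [NormedField 𝕜] [NormedRing A]
    [NormedAlgebra 𝕜 A] [HasSummableGeomSeries A] {Λ : A →ₗ[𝕜] 𝕜} (h1 : Λ 1 = 1)
    (hinv : ∀ a, IsUnit a → Λ a ≠ 0) (x : A) : ‖Λ x‖ ≤ ‖x‖ := by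
  by_contra! hx
  have hΛx : Λ x ≠ 0 := norm_pos_iff.mp ((norm_nonneg x).trans_lt hx)
  have hsmall : ‖(Λ x)⁻¹ • x‖ < 1 := by
    rwa [norm_smul, norm_inv, inv_mul_lt_iff₀ (norm_pos_iff.mpr hΛx), mul_one]
  apply hinv _ (isUnit_one_sub_of_norm_lt_one hsmall)
  rw [map_sub, map_smul, h1, smul_eq_mul, inv_mul_cancel₀ hΛx, sub_self]

variable {A : Type*} [NormedRing A] [NormedAlgebra ℂ A] [CompleteSpace A] {Λ : A →ₗ[ℂ] ℂ}

theorem map_mul_self_eq_zero_of_map_eq_zero (h1 : Λ 1 = 1) (hinv : ∀ a, IsUnit a → Λ a ≠ 0)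
    {a : A} (ha : Λ a = 0) : Λ (a * a) = 0 := by
  let Λc : A →L[ℂ] ℂ := Λ.mkContinuous 1 fun x =>
    (norm_apply_le_of_map_isUnit_ne_zero h1 hinv x).trans_eq (one_mul _).symm
  set f : ℂ → ℂ := fun z => Λc (exp (z • a))
  have hf (z : ℂ) : HasDerivAt f (Λc (a * exp (z • a))) z :=
    Λc.hasFDerivAt.comp_hasDerivAt z (hasDerivAt_exp_smul_const' a z)
  have hf' : HasDerivAt (deriv f) (Λc (a * (a * exp ((0 : ℂ) • a)))) 0 := by
    rw [funext fun z => (hf z).deriv]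
    exact (Λc.comp (ContinuousLinearMap.mul ℂ A a)).hasFDerivAt.comp_hasDerivAt 0
      (hasDerivAt_exp_smul_const' a 0)
  have hf0 (z : ℂ) : f z ≠ 0 := hinv _ <| isUnit_exp_of_mem_ball (𝕂 := ℂ) <|
    (expSeries_radius_eq_top ℂ A).symm ▸ edist_lt_top _ _
  have hbound (z : ℂ) : ‖f z‖ ≤ max ‖(1 : A)‖ 1 * Real.exp (‖a‖ * ‖z‖) := by
    refine (norm_apply_le_of_map_isUnit_ne_zero h1 hinv _).trans ?_
    simpa [norm_smul, mul_comm] using norm_exp_le_mul_exp_norm (z • a)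
  have := Complex.deriv_deriv_eq_zero_of_ne_zero_of_norm_le_mul_exp
    (fun z => (hf z).differentiableAt) hf0 hbound
    (by simp [f, Λc, h1]) (by simp [(hf 0).deriv, Λc, ha])
  simpa [hf'.deriv, Λc] using this

theorem map_mul_self_of_map_isUnit_ne_zero (h1 : Λ 1 = 1) (hinv : ∀ a, IsUnit a → Λ a ≠ 0)
    (a : A) : Λ (a * a) = Λ a * Λ a := by
  have hsq :
      (a - Λ a • 1) * (a - Λ a • 1) = a * a - (2 * Λ a) • a + (Λ a * Λ a) • 1 := by
    simp only [sub_mul, mul_sub, smul_mul_assoc, mul_smul_comm, one_mul, mul_one]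
    module
  have := map_mul_self_eq_zero_of_map_eq_zero h1 hinv (a := a - Λ a • 1) (by simp [h1])
  rw [hsq] at this
  simp only [map_add, map_sub, map_smul, smul_eq_mul, h1] at this
  linear_combination this

end LinearMap

/-- If `A` is a complex unital Banach algebra and `Λ : A → ℂ` is a linear functional
(not assumed continuous) with `Λ 1 = 1` that is non-zero on every invertible element,
then `Λ (ab + ba) = 2 Λ a Λ b` for all `a b ∈ A`. -/
theorem gkz_anticommutator {A : Type*} [NormedRing A] [NormedAlgebra ℂ A] [CompleteSpace A]
    (Λ : A →ₗ[ℂ] ℂ) (h1 : Λ 1 = 1) (hinv : ∀ a : A, IsUnit a → Λ a ≠ 0) :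
    ∀ a b : A, Λ (a * b + b * a) = 2 * Λ a * Λ b := by
  have hsq := Λ.map_mul_self_of_map_isUnit_ne_zero h1 hinv
  intro a b
  have hexpand : (a + b) * (a + b) = a * a + (a * b + b * a) + b * b := by noncomm_ring
  have := hsq (a + b)
  rw [hexpand] at this
  simp only [map_add, hsq a, hsq b] at this ⊢
  linear_combination this
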